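/- arXiv:1812.00433 — 3 statements merged into one kernel-verified Lean document; each statement's English description precedes it below -/
import Mathlib

section
/- Let M, K, L be positive integers. For l = 1,…,L and i, k = 1,…,K let h_{l,i} ∈ ℂ^{1×M} be row vectors, let p_1, …, p_K ∈ ℂ^M with p_A = Σ_{k} p_k, let 0 ≤ α ≤ 1 with ᾱ = 1−α, let r_{u,li} > 0, r_{c,li} > 0, ε_{u,li} > 0, ε_{c,li} > 0 be reals, and let μ_{l,i}, η_{l,i}, λ, a_i, b, v_i, w be reals. For each k define F_k = − Σ_{l} μ_{l,k} a_k ε_{u,lk} r_{u,lk}^{−1} (h_{l,k} p_k) h_{l,k}ᴴ + Σ_{i≠k} Σ_{l} ᾱ μ_{l,i} a_i ε_{u,li} r_{u,li}^{−2} |h_{l,i} p_i|² (h_{l,i} p_k) h_{l,i}ᴴ + Σ_{i} Σ_{l} ᾱ η_{l,i} b ε_{c,li} r_{c,li}^{−2} |h_{l,i} p_A|² (h_{l,i} p_k) h_{l,i}ᴴ − Σ_{i} Σ_{l} η_{l,i} b ε_{c,li} r_{c,li}^{−1} (h_{l,i} p_A) h_{l,i}ᴴ + λ( α p_A + ᾱ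 p_k ), and define G_k to be the same expression with every factor a_i ε_{u,li} replaced by v_i (ε_{u,li})² and every factor b ε_{c,li} replaced by w (ε_{c,li})². If v_k ε_{u,lk} = a_k for all l, k and w ε_{c,lk} = b for all l, k, then F_k = G_k for every k = 1,…,K. -/
open scoped BigOperators

/-- Equality of the gradients (w.r.t. the precoder `p_k`) of the Lagrangians of
the WSR maximization problem (`F`) and of the WMMSE minimization problem (`G`)
for signal model 1, under the weight choices `v_k ε_{u,lk} = a_k` and
`w ε_{c,lk} = b`. -/
theorem stmt7 (M K L : ℕ) (hM : 0 < M) (hK : 0 < K) (hL : 0 < L)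
    (h : Fin L → Fin K → Fin M → ℂ)
    (p : Fin K → Fin M → ℂ) (pA : Fin M → ℂ) (hpA : pA = ∑ k, p k)
    (α : ℝ) (hα0 : 0 ≤ α) (hα1 : α ≤ 1)
    (ru rc εu εcv : Fin L → Fin K → ℝ)
    (hru : ∀ l i, 0 < ru l i) (hrc : ∀ l i, 0 < rc l i)
    (hεu : ∀ l i, 0 < εu l i) (hεcv : ∀ l i, 0 < εcv l i)
    (μ η : Fin L → Fin K → ℝ) (lam : ℝ)
    (a : Fin K → ℝ) (b : ℝ) (v : Fin K → ℝ) (w : ℝ)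
    (F G : Fin K → Fin M → ℂ)
    (hF : ∀ k j, F k j =
      - (∑ l, ((μ l k * (a k * εu l k) * (ru l k)⁻¹ : ℝ) : ℂ)
            * ((∑ m, h l k m * p k m) * star (h l k j)))
      + (∑ i ∈ Finset.univ.erase k, ∑ l,
          (((1 - α) * μ l i * (a i * εu l i) * ((ru l i) ^ 2)⁻¹
              * ‖∑ m, h l i m * p i m‖ ^ 2 : ℝ) : ℂ)
            * ((∑ m, h l i m * p k m) * star (h l i j)))
      + (∑ i, ∑ l,
          (((1 - α) * η l i * (b * εcv l i) * ((rc l i) ^ 2)⁻¹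
              * ‖∑ m, h l i m * pA m‖ ^ 2 : ℝ) : ℂ)
            * ((∑ m, h l i m * p k m) * star (h l i j)))
      - (∑ i, ∑ l, ((η l i * (b * εcv l i) * (rc l i)⁻¹ : ℝ) : ℂ)
            * ((∑ m, h l i m * pA m) * star (h l i j)))
      + (lam : ℂ) * ((α : ℂ) * pA j + ((1 - α : ℝ) : ℂ) * p k j))
    (hG : ∀ k j, G k j =
      - (∑ l, ((μ l k * (v k * εu l k ^ 2) * (ru l k)⁻¹ : ℝ) : ℂ)
            * ((∑ m, h l k m * p k m) * star (h l k j)))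
      + (∑ i ∈ Finset.univ.erase k, ∑ l,
          (((1 - α) * μ l i * (v i * εu l i ^ 2) * ((ru l i) ^ 2)⁻¹
              * ‖∑ m, h l i m * p i m‖ ^ 2 : ℝ) : ℂ)
            * ((∑ m, h l i m * p k m) * star (h l i j)))
      + (∑ i, ∑ l,
          (((1 - α) * η l i * (w * εcv l i ^ 2) * ((rc l i) ^ 2)⁻¹
              * ‖∑ m, h l i m * pA m‖ ^ 2 : ℝ) : ℂ)
            * ((∑ m, h l i m * p k m) * star (h l i j)))
      - (∑ i, ∑ l, ((η l i * (w * εcv l i ^ 2) * (rc l i)⁻¹ : ℝ) : ℂ)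
            * ((∑ m, h l i m * pA m) * star (h l i j)))
      + (lam : ℂ) * ((α : ℂ) * pA j + ((1 - α : ℝ) : ℂ) * p k j))
    (hvw : ∀ l k, v k * εu l k = a k) (hww : ∀ l k, w * εcv l k = b) :
    ∀ k, F k = G k := by
  have h1 : ∀ l i, v i * εu l i ^ 2 = a i * εu l i := fun l i => by
    rw [sq, ← mul_assoc, hvw]
  have h2 : ∀ l i, w * εcv l i ^ 2 = b * εcv l i := fun l i => by
    rw [sq, ← mul_assoc, hww]
  intro k
  funext j
  rw [hF, hG]
  simp only [h1, h2]
end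

section
/- Let M, K, L be positive integers, h_{l,k} ∈ ℂ^{1×M} row vectors, W_{l,k}, V_{l,k} ∈ ℂ, ξ_{l,k}, ψ_{l,k}, v_k, w, β, E real with E > 0, 0 ≤ α ≤ 1 and ᾱ = 1−α, and p_1, …, p_K ∈ ℂ^M with p_A = Σ_j p_j. Suppose: (i) for every l, k: ψ_{l,k} w α conj(h_{l,k} p_A) = ψ_{l,k} w ( ᾱ Σ_i |h_{l,k} p_i|² + α |h_{l,k} p_A|² + 1 ) W_{l,k}; (ii) for every l, k: ξ_{l,k} v_k ᾱ conj(h_{l,k} p_k) = ξ_{l,k} v_k ( ᾱ Σ_i |h_{l,k} p_i|² + 1 ) V_{l,k}; (iii) for every k: Σ_{l} ξ_{l,k} v_k ᾱ conj(V_{l,k}) h_{l,k}ᴴ + Σ_{i,l} ψ_{l,i} w α conj(W_{l,i}) h_{l,i}ᴴ = Σ_{i,l} ξ_{l,i} v_i ᾱ |V_{l,i}|² h_{l,i}ᴴ h_{l,i} p_k + Σ_{i,l} ψ_{l,i} w ᾱ |W_{l,i}|² h_{l,i}ᴴ h_{l,i} p_k + Σ_{i,l} ψ_{l,i} w α |W_{l,i}|²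 h_{l,i}ᴴ h_{l,i} p_A + β ( α p_A + ᾱ p_k ); and (iv) α ‖p_A‖² + ᾱ Σ_{k} ‖p_k‖² = E. Then β = (1/E) Σ_{k=1}^K Σ_{l=1}^L ( ξ_{l,k} v_k |V_{l,k}|² + ψ_{l,k} w |W_{l,k}|² ). -/
open scoped BigOperators

private lemma aux_sum1 (n M : ℕ) (a : Fin n → ℂ) (hh : Fin n → Fin M → ℂ) (q : Fin M → ℂ) :
    ∑ j, (∑ l, a l * star (hh l j)) * star (q j)
      = ∑ l, a l * star (∑ j, hh l j * q j) := by
  simp only [Finset.sum_mul]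
  rw [Finset.sum_comm]
  refine Finset.sum_congr rfl fun l _ => ?_
  simp only [mul_assoc, ← Finset.mul_sum]
  congr 1
  simp [star_sum, star_mul']

private lemma aux_sum2 (n n' M : ℕ) (a : Fin n → Fin n' → ℂ)
    (hh : Fin n → Fin n' → Fin M → ℂ) (q : Fin M → ℂ) :
    ∑ j, (∑ i, ∑ l, a i l * star (hh i l j)) * star (q j)
      = ∑ i, ∑ l, a i l * star (∑ j, hh i l j * q j) := by
  simp only [Finset.sum_mul]
  rw [Finset.sum_comm]
  refine Finset.sum_congr rfl fun i _ => ?_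
  rw [Finset.sum_comm]
  refine Finset.sum_congr rfl fun l _ => ?_
  simp only [mul_assoc, ← Finset.mul_sum]
  congr 1
  simp [star_sum, star_mul']

/-- Lagrange-multiplier part of Theorem 1 for signal model 1: under the KKT
stationarity conditions for the receivers and precoders and the power
constraint met with equality, the power-constraint multiplier `β` equals
`(1/E) Σ_{k,l} (ξ_{l,k} v_k |V_{l,k}|² + ψ_{l,k} w |W_{l,k}|²)`. -/
theorem stmt13 (M K L : ℕ) (hM : 0 < M) (hK : 0 < K) (hL : 0 < L)
    (h : Fin L → Fin K → Fin M → ℂ)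
    (W V : Fin L → Fin K → ℂ)
    (ξ ψ : Fin L → Fin K → ℝ) (v : Fin K → ℝ) (w β E : ℝ) (hE : 0 < E)
    (α : ℝ) (hα0 : 0 ≤ α) (hα1 : α ≤ 1)
    (p : Fin K → Fin M → ℂ) (pA : Fin M → ℂ) (hpA : pA = ∑ j, p j)
    (hi : ∀ l k, ((ψ l k * w * α : ℝ) : ℂ) * star (∑ j, h l k j * pA j)
        = ((ψ l k * w : ℝ) : ℂ)
          * (((1 - α) * (∑ i, ‖∑ j, h l k j * p i j‖ ^ 2)
              + α * ‖∑ j, h l k j * pA j‖ ^ 2 + 1 : ℝ) : ℂ) * W l k)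
    (hii : ∀ l k, ((ξ l k * v k * (1 - α) : ℝ) : ℂ) * star (∑ j, h l k j * p k j)
        = ((ξ l k * v k : ℝ) : ℂ)
          * (((1 - α) * (∑ i, ‖∑ j, h l k j * p i j‖ ^ 2) + 1 : ℝ) : ℂ) * V l k)
    (hiii : ∀ k, ∀ j,
        (∑ l, ((ξ l k * v k * (1 - α) : ℝ) : ℂ) * star (V l k) * star (h l k j))
        + (∑ i, ∑ l, ((ψ l i * w * α : ℝ) : ℂ) * star (W l i) * star (h l i j))
      = (∑ i, ∑ l, ((ξ l i * v i * (1 - α) * ‖V l i‖ ^ 2 : ℝ) : ℂ)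
            * ((∑ m, h l i m * p k m) * star (h l i j)))
        + (∑ i, ∑ l, ((ψ l i * w * (1 - α) * ‖W l i‖ ^ 2 : ℝ) : ℂ)
            * ((∑ m, h l i m * p k m) * star (h l i j)))
        + (∑ i, ∑ l, ((ψ l i * w * α * ‖W l i‖ ^ 2 : ℝ) : ℂ)
            * ((∑ m, h l i m * pA m) * star (h l i j)))
        + (β : ℂ) * ((α : ℂ) * pA j + ((1 - α : ℝ) : ℂ) * p k j))
    (hiv : α * (∑ j, ‖pA j‖ ^ 2) + (1 - α) * (∑ k, ∑ j, ‖p k j‖ ^ 2) = E) :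
    β = (1 / E) * ∑ k, ∑ l, (ξ l k * v k * ‖V l k‖ ^ 2 + ψ l k * w * ‖W l k‖ ^ 2) := by
  classical
  have mulconj : ∀ z : ℂ, z * star z = ((‖z‖ ^ 2 : ℝ) : ℂ) := fun z => by
    simp [Complex.star_def, Complex.mul_conj']
  have conjmul : ∀ z : ℂ, star z * z = ((‖z‖ ^ 2 : ℝ) : ℂ) := fun z => by
    simp [Complex.star_def, Complex.conj_mul']
  have hpAj : ∀ j, pA j = ∑ k, p k j := by
    intro j; rw [hpA]; simp
  -- ∑ₖ star(h·pₖ) = star(h·p_A)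
  have hstarA : ∀ l i, (∑ k, star (∑ j, h l i j * p k j)) = star (∑ j, h l i j * pA j) := by
    intro l i
    rw [← star_sum]
    congr 1
    rw [Finset.sum_comm]
    refine Finset.sum_congr rfl fun j _ => ?_
    rw [← Finset.mul_sum, ← hpAj j]
  -- receiver stationarity paired with star of receiver
  have eqV : ∀ l k,
      ((ξ l k * v k * (1 - α) : ℝ) : ℂ) * star (V l k) * star (∑ j, h l k j * p k j)
        = ((ξ l k * v k * ((1 - α) * (∑ i, ‖∑ j, h l k j * p i j‖ ^ 2) + 1)
              * ‖V l k‖ ^ 2 : ℝ) : ℂ) := by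
    intro l k
    calc ((ξ l k * v k * (1 - α) : ℝ) : ℂ) * star (V l k) * star (∑ j, h l k j * p k j)
        = star (V l k) * (((ξ l k * v k * (1 - α) : ℝ) : ℂ) * star (∑ j, h l k j * p k j)) := by
          ring
      _ = star (V l k) * (((ξ l k * v k : ℝ) : ℂ)
            * (((1 - α) * (∑ i, ‖∑ j, h l k j * p i j‖ ^ 2) + 1 : ℝ) : ℂ) * V l k) := by
          rw [hii l k]
      _ = ((ξ l k * v k : ℝ) : ℂ)
            * (((1 - α) * (∑ i, ‖∑ j, h l k j * p i j‖ ^ 2) + 1 : ℝ) : ℂ)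
            * (star (V l k) * V l k) := by ring
      _ = _ := by rw [conjmul (V l k)]; push_cast; ring
  have eqW : ∀ l k,
      ((ψ l k * w * α : ℝ) : ℂ) * star (W l k) * star (∑ j, h l k j * pA j)
        = ((ψ l k * w * ((1 - α) * (∑ i, ‖∑ j, h l k j * p i j‖ ^ 2)
              + α * ‖∑ j, h l k j * pA j‖ ^ 2 + 1) * ‖W l k‖ ^ 2 : ℝ) : ℂ) := by
    intro l k
    calc ((ψ l k * w * α : ℝ) : ℂ) * star (W l k) * star (∑ j, h l k j * pA j)
        = star (W l k) * (((ψ l k * w * α : ℝ) : ℂ) * star (∑ j, h l k j * pA j)) := by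
          ring
      _ = star (W l k) * (((ψ l k * w : ℝ) : ℂ)
            * (((1 - α) * (∑ i, ‖∑ j, h l k j * p i j‖ ^ 2)
                + α * ‖∑ j, h l k j * pA j‖ ^ 2 + 1 : ℝ) : ℂ) * W l k) := by
          rw [hi l k]
      _ = ((ψ l k * w : ℝ) : ℂ)
            * (((1 - α) * (∑ i, ‖∑ j, h l k j * p i j‖ ^ 2)
                + α * ‖∑ j, h l k j * pA j‖ ^ 2 + 1 : ℝ) : ℂ)
            * (star (W l k) * W l k) := by ring
      _ = _ := by rw [conjmul (W l k)]; push_cast; ring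
  -- LHS piece 1
  have hL1 : (∑ k, ∑ j,
        (∑ l, ((ξ l k * v k * (1 - α) : ℝ) : ℂ) * star (V l k) * star (h l k j))
          * star (p k j))
      = ((∑ k, ∑ l, ξ l k * v k
            * ((1 - α) * (∑ i, ‖∑ j, h l k j * p i j‖ ^ 2) + 1) * ‖V l k‖ ^ 2 : ℝ) : ℂ) := by
    calc (∑ k, ∑ j,
          (∑ l, ((ξ l k * v k * (1 - α) : ℝ) : ℂ) * star (V l k) * star (h l k j))
            * star (p k j))
        = ∑ k, ∑ l, ((ξ l k * v k * (1 - α) : ℝ) : ℂ) * star (V l k)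
            * star (∑ j, h l k j * p k j) := by
          refine Finset.sum_congr rfl fun k _ => ?_
          exact aux_sum1 L M (fun l => ((ξ l k * v k * (1 - α) : ℝ) : ℂ) * star (V l k))
            (fun l j => h l k j) (p k)
      _ = ∑ k, ∑ l, ((ξ l k * v k
            * ((1 - α) * (∑ i, ‖∑ j, h l k j * p i j‖ ^ 2) + 1) * ‖V l k‖ ^ 2 : ℝ) : ℂ) := by
          exact Finset.sum_congr rfl fun k _ => Finset.sum_congr rfl fun l _ => eqV l k
      _ = _ := by push_cast; ring
  -- LHS piece 2
  have hL2 : (∑ k, ∑ j,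
        (∑ i, ∑ l, ((ψ l i * w * α : ℝ) : ℂ) * star (W l i) * star (h l i j))
          * star (p k j))
      = ((∑ i, ∑ l, ψ l i * w
            * ((1 - α) * (∑ i', ‖∑ j, h l i j * p i' j‖ ^ 2)
              + α * ‖∑ j, h l i j * pA j‖ ^ 2 + 1) * ‖W l i‖ ^ 2 : ℝ) : ℂ) := by
    calc (∑ k, ∑ j,
          (∑ i, ∑ l, ((ψ l i * w * α : ℝ) : ℂ) * star (W l i) * star (h l i j))
            * star (p k j))
        = ∑ k, ∑ i, ∑ l, ((ψ l i * w * α : ℝ) : ℂ) * star (W l i)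
            * star (∑ j, h l i j * p k j) := by
          refine Finset.sum_congr rfl fun k _ => ?_
          exact aux_sum2 K L M (fun i l => ((ψ l i * w * α : ℝ) : ℂ) * star (W l i))
            (fun i l j => h l i j) (p k)
      _ = ∑ i, ∑ l, ∑ k, ((ψ l i * w * α : ℝ) : ℂ) * star (W l i)
            * star (∑ j, h l i j * p k j) := by
          rw [Finset.sum_comm]
          exact Finset.sum_congr rfl fun i _ => Finset.sum_comm
      _ = ∑ i, ∑ l, ((ψ l i * w * α : ℝ) : ℂ) * star (W l i)
            * star (∑ j, h l i j * pA j) := by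
          refine Finset.sum_congr rfl fun i _ => Finset.sum_congr rfl fun l _ => ?_
          rw [← Finset.mul_sum, hstarA l i]
      _ = ∑ i, ∑ l, ((ψ l i * w
            * ((1 - α) * (∑ i', ‖∑ j, h l i j * p i' j‖ ^ 2)
              + α * ‖∑ j, h l i j * pA j‖ ^ 2 + 1) * ‖W l i‖ ^ 2 : ℝ) : ℂ) := by
          exact Finset.sum_congr rfl fun i _ => Finset.sum_congr rfl fun l _ => eqW l i
      _ = _ := by push_cast; ring
  -- RHS pieces with precoder p k (generic in the real coefficient C)
  have hR : ∀ C : Fin L → Fin K → ℝ,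
      (∑ k, ∑ j, (∑ i, ∑ l, ((C l i : ℝ) : ℂ)
          * ((∑ m, h l i m * p k m) * star (h l i j))) * star (p k j))
        = ((∑ i, ∑ l, C l i * ∑ k, ‖∑ m, h l i m * p k m‖ ^ 2 : ℝ) : ℂ) := by
    intro C
    calc (∑ k, ∑ j, (∑ i, ∑ l, ((C l i : ℝ) : ℂ)
          * ((∑ m, h l i m * p k m) * star (h l i j))) * star (p k j))
        = ∑ k, ∑ i, ∑ l, (((C l i : ℝ) : ℂ) * (∑ m, h l i m * p k m))
            * star (∑ j, h l i j * p k j) := by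
          refine Finset.sum_congr rfl fun k _ => ?_
          simp only [← mul_assoc]
          exact aux_sum2 K L M
            (fun i l => ((C l i : ℝ) : ℂ) * (∑ m, h l i m * p k m))
            (fun i l j => h l i j) (p k)
      _ = ∑ k, ∑ i, ∑ l, ((C l i : ℝ) : ℂ) * ((‖∑ m, h l i m * p k m‖ ^ 2 : ℝ) : ℂ) := by
          refine Finset.sum_congr rfl fun k _ => Finset.sum_congr rfl fun i _ =>
            Finset.sum_congr rfl fun l _ => ?_
          rw [mul_assoc, mulconj (∑ m, h l i m * p k m)]
      _ = ∑ i, ∑ l, ∑ k, ((C l i : ℝ) : ℂ) * ((‖∑ m, h l i m * p k m‖ ^ 2 : ℝ) : ℂ) := by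
          rw [Finset.sum_comm]
          exact Finset.sum_congr rfl fun i _ => Finset.sum_comm
      _ = _ := by push_cast [Finset.mul_sum]; ring
  -- RHS piece with precoder p_A
  have hR3 : ∀ C : Fin L → Fin K → ℝ,
      (∑ k, ∑ j, (∑ i, ∑ l, ((C l i : ℝ) : ℂ)
          * ((∑ m, h l i m * pA m) * star (h l i j))) * star (p k j))
        = ((∑ i, ∑ l, C l i * ‖∑ m, h l i m * pA m‖ ^ 2 : ℝ) : ℂ) := by
    intro C
    calc (∑ k, ∑ j, (∑ i, ∑ l, ((C l i : ℝ) : ℂ)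
          * ((∑ m, h l i m * pA m) * star (h l i j))) * star (p k j))
        = ∑ k, ∑ i, ∑ l, (((C l i : ℝ) : ℂ) * (∑ m, h l i m * pA m))
            * star (∑ j, h l i j * p k j) := by
          refine Finset.sum_congr rfl fun k _ => ?_
          simp only [← mul_assoc]
          exact aux_sum2 K L M
            (fun i l => ((C l i : ℝ) : ℂ) * (∑ m, h l i m * pA m))
            (fun i l j => h l i j) (p k)
      _ = ∑ i, ∑ l, ∑ k, (((C l i : ℝ) : ℂ) * (∑ m, h l i m * pA m))
            * star (∑ j, h l i j * p k j) := by
          rw [Finset.sum_comm]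
          exact Finset.sum_congr rfl fun i _ => Finset.sum_comm
      _ = ∑ i, ∑ l, ((C l i : ℝ) : ℂ)
            * ((‖∑ m, h l i m * pA m‖ ^ 2 : ℝ) : ℂ) := by
          refine Finset.sum_congr rfl fun i _ => Finset.sum_congr rfl fun l _ => ?_
          rw [← Finset.mul_sum, hstarA l i, mul_assoc]
          congr 1
          have : star (∑ j, h l i j * pA j) = star (∑ m, h l i m * pA m) := rfl
          rw [this, mulconj (∑ m, h l i m * pA m)]
      _ = _ := by push_cast; ring
  -- β piece
  have hT4 : (∑ k, ∑ j, (β : ℂ) * ((α : ℂ) * pA j + ((1 - α : ℝ) : ℂ) * p k j)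
        * star (p k j)) = ((β * E : ℝ) : ℂ) := by
    have expand : ∀ k j, (β : ℂ) * ((α : ℂ) * pA j + ((1 - α : ℝ) : ℂ) * p k j)
          * star (p k j)
        = (β : ℂ) * (α : ℂ) * (pA j * star (p k j))
          + (β : ℂ) * ((1 - α : ℝ) : ℂ) * (p k j * star (p k j)) := fun k j => by ring
    calc (∑ k, ∑ j, (β : ℂ) * ((α : ℂ) * pA j + ((1 - α : ℝ) : ℂ) * p k j) * star (p k j))
        = ∑ j, ∑ k, ((β : ℂ) * (α : ℂ) * (pA j * star (p k j))
            + (β : ℂ) * ((1 - α : ℝ) : ℂ) * (p k j * star (p k j))) := by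
          rw [Finset.sum_comm]
          exact Finset.sum_congr rfl fun j _ => Finset.sum_congr rfl fun k _ => expand k j
      _ = ∑ j, ((β : ℂ) * (α : ℂ) * (pA j * star (pA j))
            + (β : ℂ) * ((1 - α : ℝ) : ℂ) * ∑ k, ((‖p k j‖ ^ 2 : ℝ) : ℂ)) := by
          refine Finset.sum_congr rfl fun j _ => ?_
          rw [Finset.sum_add_distrib]
          congr 1
          · rw [← Finset.mul_sum, ← Finset.mul_sum, ← star_sum, ← hpAj j]
          · rw [← Finset.mul_sum]
            congr 1
            exact Finset.sum_congr rfl fun k _ => mulconj (p k j)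
      _ = ∑ j, ((β * (α * ‖pA j‖ ^ 2 + (1 - α) * ∑ k, ‖p k j‖ ^ 2) : ℝ) : ℂ) := by
          refine Finset.sum_congr rfl fun j _ => ?_
          rw [mulconj (pA j)]
          push_cast
          ring
      _ = ((β * E : ℝ) : ℂ) := by
          rw [← Complex.ofReal_sum]
          congr 1
          norm_cast
          calc ∑ j, β * (α * ‖pA j‖ ^ 2 + (1 - α) * ∑ k, ‖p k j‖ ^ 2)
              = β * (α * (∑ j, ‖pA j‖ ^ 2) + (1 - α) * (∑ k, ∑ j, ‖p k j‖ ^ 2)) := by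
                rw [← Finset.mul_sum, Finset.sum_add_distrib, ← Finset.mul_sum, ← Finset.mul_sum,
                  Finset.sum_comm (f := fun j k => ‖p k j‖ ^ 2)]
            _ = β * E := by rw [hiv]
  -- specialize hR
  have hR1 : (∑ k, ∑ j, (∑ i, ∑ l, ((ξ l i * v i * (1 - α) * ‖V l i‖ ^ 2 : ℝ) : ℂ)
        * ((∑ m, h l i m * p k m) * star (h l i j))) * star (p k j))
      = ((∑ i, ∑ l, ξ l i * v i * (1 - α) * ‖V l i‖ ^ 2
          * ∑ k, ‖∑ m, h l i m * p k m‖ ^ 2 : ℝ) : ℂ) :=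
    hR fun l i => ξ l i * v i * (1 - α) * ‖V l i‖ ^ 2
  have hR2 : (∑ k, ∑ j, (∑ i, ∑ l, ((ψ l i * w * (1 - α) * ‖W l i‖ ^ 2 : ℝ) : ℂ)
        * ((∑ m, h l i m * p k m) * star (h l i j))) * star (p k j))
      = ((∑ i, ∑ l, ψ l i * w * (1 - α) * ‖W l i‖ ^ 2
          * ∑ k, ‖∑ m, h l i m * p k m‖ ^ 2 : ℝ) : ℂ) :=
    hR fun l i => ψ l i * w * (1 - α) * ‖W l i‖ ^ 2
  have hR3' : (∑ k, ∑ j, (∑ i, ∑ l, ((ψ l i * w * α * ‖W l i‖ ^ 2 : ℝ) : ℂ)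
        * ((∑ m, h l i m * pA m) * star (h l i j))) * star (p k j))
      = ((∑ i, ∑ l, ψ l i * w * α * ‖W l i‖ ^ 2 * ‖∑ m, h l i m * pA m‖ ^ 2 : ℝ) : ℂ) :=
    hR3 fun l i => ψ l i * w * α * ‖W l i‖ ^ 2
  -- combine condition (iii) paired with star (p k j)
  have hmain :
      (∑ k, ∑ j, (∑ l, ((ξ l k * v k * (1 - α) : ℝ) : ℂ) * star (V l k) * star (h l k j))
          * star (p k j))
      + (∑ k, ∑ j, (∑ i, ∑ l, ((ψ l i * w * α : ℝ) : ℂ) * star (W l i) * star (h l i j))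
          * star (p k j))
    = (∑ k, ∑ j, (∑ i, ∑ l, ((ξ l i * v i * (1 - α) * ‖V l i‖ ^ 2 : ℝ) : ℂ)
          * ((∑ m, h l i m * p k m) * star (h l i j))) * star (p k j))
      + (∑ k, ∑ j, (∑ i, ∑ l, ((ψ l i * w * (1 - α) * ‖W l i‖ ^ 2 : ℝ) : ℂ)
          * ((∑ m, h l i m * p k m) * star (h l i j))) * star (p k j))
      + (∑ k, ∑ j, (∑ i, ∑ l, ((ψ l i * w * α * ‖W l i‖ ^ 2 : ℝ) : ℂ)
          * ((∑ m, h l i m * pA m) * star (h l i j))) * star (p k j))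
      + (∑ k, ∑ j, (β : ℂ) * ((α : ℂ) * pA j + ((1 - α : ℝ) : ℂ) * p k j) * star (p k j)) := by
    calc (∑ k, ∑ j, (∑ l, ((ξ l k * v k * (1 - α) : ℝ) : ℂ) * star (V l k) * star (h l k j))
            * star (p k j))
        + (∑ k, ∑ j, (∑ i, ∑ l, ((ψ l i * w * α : ℝ) : ℂ) * star (W l i) * star (h l i j))
            * star (p k j))
        = ∑ k, ∑ j,
            ((∑ l, ((ξ l k * v k * (1 - α) : ℝ) : ℂ) * star (V l k) * star (h l k j))
              + (∑ i, ∑ l, ((ψ l i * w * α : ℝ) : ℂ) * star (W l i) * star (h l i j)))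
              * star (p k j) := by
          simp only [add_mul, Finset.sum_add_distrib]
      _ = ∑ k, ∑ j,
            ((∑ i, ∑ l, ((ξ l i * v i * (1 - α) * ‖V l i‖ ^ 2 : ℝ) : ℂ)
                * ((∑ m, h l i m * p k m) * star (h l i j)))
              + (∑ i, ∑ l, ((ψ l i * w * (1 - α) * ‖W l i‖ ^ 2 : ℝ) : ℂ)
                * ((∑ m, h l i m * p k m) * star (h l i j)))
              + (∑ i, ∑ l, ((ψ l i * w * α * ‖W l i‖ ^ 2 : ℝ) : ℂ)
                * ((∑ m, h l i m * pA m) * star (h l i j)))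
              + (β : ℂ) * ((α : ℂ) * pA j + ((1 - α : ℝ) : ℂ) * p k j)) * star (p k j) :=
          Finset.sum_congr rfl fun k _ => Finset.sum_congr rfl fun j _ => by rw [hiii k j]
      _ = _ := by simp only [add_mul, Finset.sum_add_distrib]
  rw [hL1, hL2, hR1, hR2, hR3', hT4] at hmain
  have hreal :
      (∑ k, ∑ l, ξ l k * v k
          * ((1 - α) * (∑ i, ‖∑ j, h l k j * p i j‖ ^ 2) + 1) * ‖V l k‖ ^ 2)
      + (∑ i, ∑ l, ψ l i * w
          * ((1 - α) * (∑ i', ‖∑ j, h l i j * p i' j‖ ^ 2)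
            + α * ‖∑ j, h l i j * pA j‖ ^ 2 + 1) * ‖W l i‖ ^ 2)
    = (∑ i, ∑ l, ξ l i * v i * (1 - α) * ‖V l i‖ ^ 2 * ∑ k, ‖∑ m, h l i m * p k m‖ ^ 2)
      + (∑ i, ∑ l, ψ l i * w * (1 - α) * ‖W l i‖ ^ 2 * ∑ k, ‖∑ m, h l i m * p k m‖ ^ 2)
      + (∑ i, ∑ l, ψ l i * w * α * ‖W l i‖ ^ 2 * ‖∑ m, h l i m * pA m‖ ^ 2)
      + β * E := by exact_mod_cast hmain
  have hcancel :
      (∑ k, ∑ l, ξ l k * v k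
          * ((1 - α) * (∑ i, ‖∑ j, h l k j * p i j‖ ^ 2) + 1) * ‖V l k‖ ^ 2)
      + (∑ i, ∑ l, ψ l i * w
          * ((1 - α) * (∑ i', ‖∑ j, h l i j * p i' j‖ ^ 2)
            + α * ‖∑ j, h l i j * pA j‖ ^ 2 + 1) * ‖W l i‖ ^ 2)
    = (∑ i, ∑ l, ξ l i * v i * (1 - α) * ‖V l i‖ ^ 2 * ∑ k, ‖∑ m, h l i m * p k m‖ ^ 2)
      + (∑ i, ∑ l, ψ l i * w * (1 - α) * ‖W l i‖ ^ 2 * ∑ k, ‖∑ m, h l i m * p k m‖ ^ 2)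
      + (∑ i, ∑ l, ψ l i * w * α * ‖W l i‖ ^ 2 * ‖∑ m, h l i m * pA m‖ ^ 2)
      + (∑ k, ∑ l, (ξ l k * v k * ‖V l k‖ ^ 2 + ψ l k * w * ‖W l k‖ ^ 2)) := by
    simp only [← Finset.sum_add_distrib]
    refine Finset.sum_congr rfl fun k _ => Finset.sum_congr rfl fun l _ => ?_
    ring
  have hbe : β * E = ∑ k, ∑ l, (ξ l k * v k * ‖V l k‖ ^ 2 + ψ l k * w * ‖W l k‖ ^ 2) := by
    rw [hcancel] at hreal
    linarith
  rw [← hbe]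
  field_simp
end

section
/- Let M, K, L be positive integers, h_{l,k} ∈ ℂ^{1×M} row vectors, W_{l,k}, V_{l,k} ∈ ℂ, ξ_{l,k}, ψ_{l,k}, v_k, w, β, E real with E > 0, and p_c, p_1, …, p_K ∈ ℂ^M. Suppose: (i) for every l, k: ψ_{l,k} w · conj(h_{l,k} p_c) = ψ_{l,k} w ( Σ_i |h_{l,k} p_i|² + |h_{l,k} p_c|² + 1 ) W_{l,k}; (ii) for every l, k: ξ_{l,k} v_k · conj(h_{l,k} p_k) = ξ_{l,k} v_k ( Σ_i |h_{l,k} p_i|² + 1 ) V_{l,k}; (iii) for every k: Σ_{l} ξ_{l,k} v_k conj(V_{l,k}) h_{l,k}ᴴ = Σ_{i,l} ξ_{l,i} v_i |V_{l,i}|² h_{l,i}ᴴ h_{l,i} p_k + Σ_{i,l} ψ_{l,i} w |W_{l,i}|² h_{l,i}ᴴ h_{l,i} p_k + β p_k; (iv) Σ_{k,l} ψ_{l,k} w conj(W_{l,k}) h_{l,k}ᴴ = Σ_{k,l} ψ_{l,k} w |W_{l,k}|² h_{l,k}ᴴ h_{l,k} p_c + β p_c; and (v) ‖p_c‖² + Σ_{k}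 ‖p_k‖² = E. Then β = (1/E) Σ_{k=1}^K Σ_{l=1}^L ( ξ_{l,k} v_k |V_{l,k}|² + ψ_{l,k} w |W_{l,k}|² ). -/
/-!
Pair the precoder stationarity condition (iii) for `p_k` with `p_k` itself, use the receiver
condition (ii) multiplied by `conj V_{l,k}` to rewrite its left side, and sum over `k`; the terms
`ξ v |V|² |h p|²` cancel and leave `∑ ξ v |V|² = ∑ ψ w |W|² ∑_i |h p_i|² + β ∑_k ‖p_k‖²`.
Pairing (iv) with `p_c` and using (i) in the same way gives
`∑ ψ w |W|² (∑_i |h p_i|² + 1) = β ‖p_c‖²`. Adding the two and using (v) yields `β E`.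
-/

lemma mul_star_self_eq_ofReal_norm_sq (z : ℂ) : z * star z = ((‖z‖ ^ 2 : ℝ) : ℂ) := by
  rw [Complex.star_def, Complex.mul_conj']
  push_cast
  rfl

lemma ofReal_mul_star_mul_star_eq {c s : ℝ} {x y : ℂ} (hxy : (c : ℂ) * star y = c * s * x) :
    c * star x * star y = ((c * s * ‖x‖ ^ 2 : ℝ) : ℂ) := by
  have hx := mul_star_self_eq_ofReal_norm_sq x
  push_cast at hx ⊢
  linear_combination star x * hxy + (c : ℂ) * s * hx

section Pairing

variable {ι n : Type*} [Fintype n]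

lemma sum_sum_mul_comm {R : Type*} [NonUnitalNonAssocSemiring R] (s : Finset ι)
    (f : ι → n → R) (r : n → R) :
    ∑ j, (∑ i ∈ s, f i j) * r j = ∑ i ∈ s, ∑ j, f i j * r j := by
  simp_rw [Finset.sum_mul]
  exact Finset.sum_comm

lemma sum_mul_star_mul_star (c : ℂ) (u q : n → ℂ) :
    ∑ j, c * star (u j) * star (q j) = c * star (∑ j, u j * q j) := by
  simp only [star_sum, star_mul', Finset.mul_sum]
  exact Finset.sum_congr rfl fun j _ => by ring

lemma sum_mul_dot_mul_star_mul_star (c : ℂ) (u q : n → ℂ) :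
    ∑ j, c * ((∑ m, u m * q m) * star (u j)) * star (q j)
      = c * ((‖∑ m, u m * q m‖ ^ 2 : ℝ) : ℂ) := by
  calc ∑ j, c * ((∑ m, u m * q m) * star (u j)) * star (q j)
      = c * (∑ m, u m * q m) * ∑ j, star (u j) * star (q j) := by
        rw [Finset.mul_sum]
        exact Finset.sum_congr rfl fun j _ => by ring
    _ = c * ((∑ m, u m * q m) * star (∑ m, u m * q m)) := by
        simp only [star_sum, star_mul', mul_assoc]
    _ = _ := by rw [mul_star_self_eq_ofReal_norm_sq]

lemma sum_mul_mul_star_self (β : ℂ) (q : n → ℂ) :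
    ∑ j, β * q j * star (q j) = β * ((∑ j, ‖q j‖ ^ 2 : ℝ) : ℂ) := by
  simp only [mul_assoc, mul_star_self_eq_ofReal_norm_sq, ← Finset.mul_sum, Complex.ofReal_sum]

end Pairing

lemma sum_sum_sum_mul_comm {ι κ ν : Type*} [Fintype ι] [Fintype κ] [Fintype ν]
    (x : ν → κ → ℝ) (g : ν → κ → ι → ℝ) :
    ∑ k, ∑ i, ∑ l, x l i * g l i k = ∑ i, ∑ l, x l i * ∑ k, g l i k := by
  rw [Finset.sum_comm]
  refine Finset.sum_congr rfl fun i _ => ?_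
  rw [Finset.sum_comm]
  simp only [Finset.mul_sum]

section Stationarity

variable {m ι κ : Type*} [Fintype m] [Fintype ι] [Fintype κ]
  (h : ι → κ → m → ℂ) (W V : ι → κ → ℂ) (ξ ψ : ι → κ → ℝ) (v : κ → ℝ) (w β : ℝ)
  (pc : m → ℂ) (p : κ → m → ℂ)

lemma multicast_precoder_pairing
    (hii : ∀ l k, ((ξ l k * v k : ℝ) : ℂ) * star (∑ j, h l k j * p k j)
        = ((ξ l k * v k : ℝ) : ℂ)
          * (((∑ i, ‖∑ j, h l k j * p i j‖ ^ 2) + 1 : ℝ) : ℂ) * V l k)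
    (k : κ)
    (hiii : ∀ j,
        (∑ l, ((ξ l k * v k : ℝ) : ℂ) * star (V l k) * star (h l k j))
      = (∑ i, ∑ l, ((ξ l i * v i * ‖V l i‖ ^ 2 : ℝ) : ℂ)
            * ((∑ m, h l i m * p k m) * star (h l i j)))
        + (∑ i, ∑ l, ((ψ l i * w * ‖W l i‖ ^ 2 : ℝ) : ℂ)
            * ((∑ m, h l i m * p k m) * star (h l i j)))
        + (β : ℂ) * p k j) :
    ∑ l, ξ l k * v k * ((∑ i, ‖∑ j, h l k j * p i j‖ ^ 2) + 1) * ‖V l k‖ ^ 2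
      = (∑ i, ∑ l, ξ l i * v i * ‖V l i‖ ^ 2 * ‖∑ m, h l i m * p k m‖ ^ 2)
        + (∑ i, ∑ l, ψ l i * w * ‖W l i‖ ^ 2 * ‖∑ m, h l i m * p k m‖ ^ 2)
        + β * ∑ j, ‖p k j‖ ^ 2 := by
  have hpair := Finset.sum_congr rfl fun j (_ : j ∈ Finset.univ) =>
    congrArg (· * star (p k j)) (hiii j)
  simp only [add_mul, Finset.sum_add_distrib, sum_sum_mul_comm, sum_mul_star_mul_star,
    sum_mul_dot_mul_star_mul_star, sum_mul_mul_star_self] at hpair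
  rw [Finset.sum_congr rfl fun l _ => ofReal_mul_star_mul_star_eq (hii l k)] at hpair
  exact_mod_cast hpair

lemma multicast_energy_balance
    (hii : ∀ l k, ((ξ l k * v k : ℝ) : ℂ) * star (∑ j, h l k j * p k j)
        = ((ξ l k * v k : ℝ) : ℂ)
          * (((∑ i, ‖∑ j, h l k j * p i j‖ ^ 2) + 1 : ℝ) : ℂ) * V l k)
    (hiii : ∀ k, ∀ j,
        (∑ l, ((ξ l k * v k : ℝ) : ℂ) * star (V l k) * star (h l k j))
      = (∑ i, ∑ l, ((ξ l i * v i * ‖V l i‖ ^ 2 : ℝ) : ℂ)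
            * ((∑ m, h l i m * p k m) * star (h l i j)))
        + (∑ i, ∑ l, ((ψ l i * w * ‖W l i‖ ^ 2 : ℝ) : ℂ)
            * ((∑ m, h l i m * p k m) * star (h l i j)))
        + (β : ℂ) * p k j) :
    ∑ k, ∑ l, ξ l k * v k * ‖V l k‖ ^ 2
      = (∑ k, ∑ l, ψ l k * w * ‖W l k‖ ^ 2 * ∑ i, ‖∑ j, h l k j * p i j‖ ^ 2)
        + β * ∑ k, ∑ j, ‖p k j‖ ^ 2 := by
  have hsum := Finset.sum_congr rfl fun k (_ : k ∈ Finset.univ) =>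
    multicast_precoder_pairing h W V ξ ψ v w β p hii k (hiii k)
  simp only [Finset.sum_add_distrib, ← Finset.mul_sum] at hsum
  rw [sum_sum_sum_mul_comm, sum_sum_sum_mul_comm] at hsum
  have hsplit : ∑ k, ∑ l, ξ l k * v k * ((∑ i, ‖∑ j, h l k j * p i j‖ ^ 2) + 1) * ‖V l k‖ ^ 2
      = (∑ k, ∑ l, ξ l k * v k * ‖V l k‖ ^ 2 * ∑ i, ‖∑ j, h l k j * p i j‖ ^ 2)
        + ∑ k, ∑ l, ξ l k * v k * ‖V l k‖ ^ 2 := by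
    simp only [← Finset.sum_add_distrib]
    exact Finset.sum_congr rfl fun k _ => Finset.sum_congr rfl fun l _ => by ring
  linarith

lemma common_energy_balance
    (hi : ∀ l k, ((ψ l k * w : ℝ) : ℂ) * star (∑ j, h l k j * pc j)
        = ((ψ l k * w : ℝ) : ℂ)
          * (((∑ i, ‖∑ j, h l k j * p i j‖ ^ 2)
              + ‖∑ j, h l k j * pc j‖ ^ 2 + 1 : ℝ) : ℂ) * W l k)
    (hiv : ∀ j,
        (∑ k, ∑ l, ((ψ l k * w : ℝ) : ℂ) * star (W l k) * star (h l k j))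
      = (∑ k, ∑ l, ((ψ l k * w * ‖W l k‖ ^ 2 : ℝ) : ℂ)
            * ((∑ m, h l k m * pc m) * star (h l k j)))
        + (β : ℂ) * pc j) :
    (∑ k, ∑ l, ψ l k * w * ‖W l k‖ ^ 2 * ∑ i, ‖∑ j, h l k j * p i j‖ ^ 2)
        + ∑ k, ∑ l, ψ l k * w * ‖W l k‖ ^ 2
      = β * ∑ j, ‖pc j‖ ^ 2 := by
  have hpair := Finset.sum_congr rfl fun j (_ : j ∈ Finset.univ) =>
    congrArg (· * star (pc j)) (hiv j)
  simp only [add_mul, Finset.sum_add_distrib, sum_sum_mul_comm, sum_mul_star_mul_star,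
    sum_mul_dot_mul_star_mul_star, sum_mul_mul_star_self] at hpair
  simp only [ofReal_mul_star_mul_star_eq (hi _ _)] at hpair
  have hreal : ∑ k, ∑ l, ψ l k * w * ((∑ i, ‖∑ j, h l k j * p i j‖ ^ 2)
        + ‖∑ j, h l k j * pc j‖ ^ 2 + 1) * ‖W l k‖ ^ 2
      = (∑ k, ∑ l, ψ l k * w * ‖W l k‖ ^ 2 * ‖∑ m, h l k m * pc m‖ ^ 2)
        + β * ∑ j, ‖pc j‖ ^ 2 := by
    exact_mod_cast hpair
  have hsplit : ∑ k, ∑ l, ψ l k * w * ((∑ i, ‖∑ j, h l k j * p i j‖ ^ 2)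
        + ‖∑ j, h l k j * pc j‖ ^ 2 + 1) * ‖W l k‖ ^ 2
      = (∑ k, ∑ l, ψ l k * w * ‖W l k‖ ^ 2 * ∑ i, ‖∑ j, h l k j * p i j‖ ^ 2)
        + (∑ k, ∑ l, ψ l k * w * ‖W l k‖ ^ 2)
        + ∑ k, ∑ l, ψ l k * w * ‖W l k‖ ^ 2 * ‖∑ m, h l k m * pc m‖ ^ 2 := by
    simp only [← Finset.sum_add_distrib]
    exact Finset.sum_congr rfl fun k _ => Finset.sum_congr rfl fun l _ => by ring
  linarith

end Stationarity

theorem stmt14_general (M K L : ℕ)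
    (h : Fin L → Fin K → Fin M → ℂ)
    (W V : Fin L → Fin K → ℂ)
    (ξ ψ : Fin L → Fin K → ℝ) (v : Fin K → ℝ) (w β E : ℝ) (hE : 0 < E)
    (pc : Fin M → ℂ) (p : Fin K → Fin M → ℂ)
    (hi : ∀ l k, ((ψ l k * w : ℝ) : ℂ) * star (∑ j, h l k j * pc j)
        = ((ψ l k * w : ℝ) : ℂ)
          * (((∑ i, ‖∑ j, h l k j * p i j‖ ^ 2)
              + ‖∑ j, h l k j * pc j‖ ^ 2 + 1 : ℝ) : ℂ) * W l k)
    (hii : ∀ l k, ((ξ l k * v k : ℝ) : ℂ) * star (∑ j, h l k j * p k j)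
        = ((ξ l k * v k : ℝ) : ℂ)
          * (((∑ i, ‖∑ j, h l k j * p i j‖ ^ 2) + 1 : ℝ) : ℂ) * V l k)
    (hiii : ∀ k, ∀ j,
        (∑ l, ((ξ l k * v k : ℝ) : ℂ) * star (V l k) * star (h l k j))
      = (∑ i, ∑ l, ((ξ l i * v i * ‖V l i‖ ^ 2 : ℝ) : ℂ)
            * ((∑ m, h l i m * p k m) * star (h l i j)))
        + (∑ i, ∑ l, ((ψ l i * w * ‖W l i‖ ^ 2 : ℝ) : ℂ)
            * ((∑ m, h l i m * p k m) * star (h l i j)))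
        + (β : ℂ) * p k j)
    (hiv : ∀ j,
        (∑ k, ∑ l, ((ψ l k * w : ℝ) : ℂ) * star (W l k) * star (h l k j))
      = (∑ k, ∑ l, ((ψ l k * w * ‖W l k‖ ^ 2 : ℝ) : ℂ)
            * ((∑ m, h l k m * pc m) * star (h l k j)))
        + (β : ℂ) * pc j)
    (hv : (∑ j, ‖pc j‖ ^ 2) + (∑ k, ∑ j, ‖p k j‖ ^ 2) = E) :
    β = (1 / E) * ∑ k, ∑ l, (ξ l k * v k * ‖V l k‖ ^ 2 + ψ l k * w * ‖W l k‖ ^ 2) := by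
  have hmulti := multicast_energy_balance h W V ξ ψ v w β p hii hiii
  have hcommon := common_energy_balance h W ψ w β pc p hi hiv
  have htotal : β * E = ∑ k, ∑ l, (ξ l k * v k * ‖V l k‖ ^ 2 + ψ l k * w * ‖W l k‖ ^ 2) := by
    rw [← hv]
    simp only [Finset.sum_add_distrib]
    linarith
  rw [← htotal]
  field_simp

/-- Lagrange-multiplier part of Theorem 1 for signal model 2: under the KKT
stationarity conditions for the receivers and all precoders (including the
dedicated common-message precoder `p_c`) and the power constraint met with
equality, the power-constraint multiplier `β` equals
`(1/E) Σ_{k,l} (ξ_{l,k} v_k |V_{l,k}|² + ψ_{l,k} w |W_{l,k}|²)`. -/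
theorem stmt14 (M K L : ℕ) (hM : 0 < M) (hK : 0 < K) (hL : 0 < L)
    (h : Fin L → Fin K → Fin M → ℂ)
    (W V : Fin L → Fin K → ℂ)
    (ξ ψ : Fin L → Fin K → ℝ) (v : Fin K → ℝ) (w β E : ℝ) (hE : 0 < E)
    (pc : Fin M → ℂ) (p : Fin K → Fin M → ℂ)
    (hi : ∀ l k, ((ψ l k * w : ℝ) : ℂ) * star (∑ j, h l k j * pc j)
        = ((ψ l k * w : ℝ) : ℂ)
          * (((∑ i, ‖∑ j, h l k j * p i j‖ ^ 2)
              + ‖∑ j, h l k j * pc j‖ ^ 2 + 1 : ℝ) : ℂ) * W l k)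
    (hii : ∀ l k, ((ξ l k * v k : ℝ) : ℂ) * star (∑ j, h l k j * p k j)
        = ((ξ l k * v k : ℝ) : ℂ)
          * (((∑ i, ‖∑ j, h l k j * p i j‖ ^ 2) + 1 : ℝ) : ℂ) * V l k)
    (hiii : ∀ k, ∀ j,
        (∑ l, ((ξ l k * v k : ℝ) : ℂ) * star (V l k) * star (h l k j))
      = (∑ i, ∑ l, ((ξ l i * v i * ‖V l i‖ ^ 2 : ℝ) : ℂ)
            * ((∑ m, h l i m * p k m) * star (h l i j)))
        + (∑ i, ∑ l, ((ψ l i * w * ‖W l i‖ ^ 2 : ℝ) : ℂ)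
            * ((∑ m, h l i m * p k m) * star (h l i j)))
        + (β : ℂ) * p k j)
    (hiv : ∀ j,
        (∑ k, ∑ l, ((ψ l k * w : ℝ) : ℂ) * star (W l k) * star (h l k j))
      = (∑ k, ∑ l, ((ψ l k * w * ‖W l k‖ ^ 2 : ℝ) : ℂ)
            * ((∑ m, h l k m * pc m) * star (h l k j)))
        + (β : ℂ) * pc j)
    (hv : (∑ j, ‖pc j‖ ^ 2) + (∑ k, ∑ j, ‖p k j‖ ^ 2) = E) :
    β = (1 / E) * ∑ k, ∑ l, (ξ l k * v k * ‖V l k‖ ^ 2 + ψ l k * w * ‖W l k‖ ^ 2) :=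
  stmt14_general M K L h W V ξ ψ v w β E hE pc p hi hii hiii hiv hv
end
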